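/- Consider a T-stage chain with layer Jacobians F_x^t ∈ ℝ^{n_{t+1}×n_t}, F_u^t ∈ ℝ^{n_{t+1}×m_t}, regularization Hessians L_t ∈ ℝ^{m_t×m_t} symmetric positive definite, and terminal value Hessian V_{xx}^T = z zᵀ for some z ∈ ℝ^{n_T}. Define backward, for t = T−1 down to 0: q_x^t = (F_x^t)ᵀ z^{t+1}, q_u^t = (F_u^t)ᵀ z^{t+1}, Q_uu^t = q_u^t (q_u^t)ᵀ + L_t, c_t = 1 − (q_u^t)ᵀ (Q_uu^t)⁻¹ q_u^t, z^t = √(c_t) · q_x^t, where z^T = z. Then for every t, the Gauss–Newton DDP value Hessian V_{xx}^t defined by V_{xx}^T = z zᵀ and V_{xx}^t = (F_x^t)ᵀ V_{xx}^{t+1} F_x^t − ((F_u^t)ᵀ V_{xx}^{t+1} F_x^t)ᵀ (Q_uu^t)⁻¹ ((F_u^t)ᵀ V_{xx}^{t+1} F_x^t) satisfies V_{xx}^t = z^t (z^t)ᵀ; that is, the outer-product factorization at the final stage is backward propagated to all preceding layers, so every state-dependent second-order matrix is an outer product of vectors. -/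

import Mathlib

open Matrix

/-!
If `V = z zᵀ`, then both `F_xᵀ V F_x = q_x q_xᵀ` and `F_uᵀ V F_x = q_u q_xᵀ` are outer products, so
the Riccati update collapses to `(1 - q_uᵀ Q_uu⁻¹ q_u) q_x q_xᵀ = c q_x q_xᵀ`. Writing `w = Q_uu⁻¹ q_u`,
the equation `Q_uu w = q_u` reads `L w = c q_u`, whence `c (1 - c) = wᵀ L w ≥ 0` and `c ≥ 0`; so
`c q_x q_xᵀ = (√c q_x)(√c q_x)ᵀ`, and backward induction from the terminal stage finishes.
-/

section RankOne

variable {R k l p : Type*} [CommRing R] [Fintype p]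

theorem transpose_mul_vecMulVec_mul (A : Matrix p k R) (B : Matrix p l R) (u v : p → R) :
    Aᵀ * vecMulVec u v * B = vecMulVec (Aᵀ *ᵥ u) (Bᵀ *ᵥ v) := by
  rw [mul_vecMulVec, vecMulVec_mul, mulVec_transpose B]

theorem riccati_update_vecMulVec [Fintype l] (A : Matrix p k R) (B : Matrix p l R)
    (Q : Matrix l l R) (z : p → R) :
    Aᵀ * vecMulVec z z * A - (Bᵀ * vecMulVec z z * A)ᵀ * Q * (Bᵀ * vecMulVec z z * A)
      = (1 - (Bᵀ *ᵥ z) ⬝ᵥ (Q *ᵥ (Bᵀ *ᵥ z))) • vecMulVec (Aᵀ *ᵥ z) (Aᵀ *ᵥ z) := by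
  rw [dotProduct_mulVec, transpose_mul_vecMulVec_mul, transpose_mul_vecMulVec_mul,
    transpose_vecMulVec, vecMulVec_mul, vecMulVec_mul_vecMulVec, vecMulVec_smul, sub_smul, one_smul]

end RankOne

theorem one_sub_dotProduct_inv_vecMulVec_add_mulVec_nonneg {k : Type*} [Fintype k] [DecidableEq k]
    {M : Matrix k k ℝ} (hM : M.PosDef) (u : k → ℝ) :
    0 ≤ 1 - u ⬝ᵥ ((vecMulVec u u + M)⁻¹ *ᵥ u) := by
  set Q := vecMulVec u u + M
  set w := Q⁻¹ *ᵥ u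
  set c := 1 - u ⬝ᵥ w
  have hQ : Q.PosDef := by
    simpa using PosDef.posSemidef_add (posSemidef_vecMulVec_self_star u) hM
  have hQw : Q *ᵥ w = u := by
    rw [mulVec_mulVec, mul_nonsing_inv _ hQ.det_pos.ne'.isUnit, one_mulVec]
  have hMw : M *ᵥ w = c • u := by
    rw [add_mulVec, vecMulVec_mulVec, op_smul_eq_smul] at hQw
    rw [sub_smul, one_smul]
    exact eq_sub_of_add_eq' hQw
  have hwMw : 0 ≤ w ⬝ᵥ (M *ᵥ w) := by
    simpa using hM.posSemidef.dotProduct_mulVec_nonneg w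
  rw [hMw, dotProduct_smul, smul_eq_mul, dotProduct_comm] at hwMw
  nlinarith

theorem vecMulVec_sqrt_smul_self {k : Type*} {c : ℝ} (hc : 0 ≤ c) (x : k → ℝ) :
    vecMulVec (√c • x) (√c • x) = c • vecMulVec x x := by
  rw [smul_vecMulVec, vecMulVec_smul, smul_smul, Real.mul_self_sqrt hc]

/-- The outer-product factorization at the final stage propagates backward:
the Gauss–Newton DDP value Hessian satisfies V_xx^t = z^t (z^t)ᵀ at every stage. -/
theorem ddp_outer_product_propagation (T : ℕ) (n m : ℕ → ℕ)
    (Fx : ∀ t, Matrix (Fin (n (t+1))) (Fin (n t)) ℝ)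
    (Fu : ∀ t, Matrix (Fin (n (t+1))) (Fin (m t)) ℝ)
    (L : ∀ t, Matrix (Fin (m t)) (Fin (m t)) ℝ)
    (hL : ∀ t, (L t).PosDef)
    (z : ∀ t, Fin (n t) → ℝ)
    (qx : ∀ t, Fin (n t) → ℝ) (qu : ∀ t, Fin (m t) → ℝ)
    (Quu : ∀ t, Matrix (Fin (m t)) (Fin (m t)) ℝ) (c : ℕ → ℝ)
    (V : ∀ t, Matrix (Fin (n t)) (Fin (n t)) ℝ)
    (hqx : ∀ t < T, qx t = (Fx t)ᵀ *ᵥ z (t+1))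
    (hqu : ∀ t < T, qu t = (Fu t)ᵀ *ᵥ z (t+1))
    (hQuu : ∀ t < T, Quu t = vecMulVec (qu t) (qu t) + L t)
    (hc : ∀ t < T, c t = 1 - qu t ⬝ᵥ ((Quu t)⁻¹ *ᵥ qu t))
    (hz : ∀ t < T, z t = Real.sqrt (c t) • qx t)
    (hVT : V T = vecMulVec (z T) (z T))
    (hV : ∀ t < T,
      V t = (Fx t)ᵀ * V (t+1) * Fx t
        - ((Fu t)ᵀ * V (t+1) * Fx t)ᵀ * (Quu t)⁻¹ * ((Fu t)ᵀ * V (t+1) * Fx t)) :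
    ∀ t ≤ T, V t = vecMulVec (z t) (z t) := by
  intro t ht
  induction ht using Nat.decreasingInduction with
  | self => exact hVT
  | of_succ t ht ih =>
    have hc_nonneg : 0 ≤ c t := by
      rw [hc t ht, hQuu t ht]
      exact one_sub_dotProduct_inv_vecMulVec_add_mulVec_nonneg (hL t) (qu t)
    rw [hV t ht, ih, riccati_update_vecMulVec, ← hqx t ht, ← hqu t ht, ← hc t ht, hz t ht,
      vecMulVec_sqrt_smul_self hc_nonneg]
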